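/- Let (X, μ, T) be an ergodic invertible probability measure-preserving system and f ∈ L^∞(μ) with ∫ f dμ = 0. Then the dual function 𝒟₂(f) := lim_{M→∞} (1/M²) ∑_{m₁,m₂=1}^M T^{m₁}f̄ · T^{m₂}f̄ · T^{m₁+m₂}f (limit in L²(μ)) satisfies ∫ 𝒟₂(f) dμ = 0. -/

import Mathlib

open MeasureTheory Filter Finset



private lemma mp_zpow' {X : Type*} [MeasurableSpace X] {μ : Measure X}
    (T : Equiv.Perm X) (h1 : MeasurePreserving ⇑T μ μ)
    (h2 : MeasurePreserving ⇑T.symm μ μ) : ∀ n : ℤ, MeasurePreserving ⇑(T ^ n) μ μ := by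
  intro n
  induction n using Int.induction_on with
  | zero => simpa using MeasurePreserving.id μ
  | succ k ih =>
      have h : (T ^ ((k : ℤ) + 1)) = T ^ (k : ℤ) * T := by rw [zpow_add, zpow_one]
      rw [h, Equiv.Perm.coe_mul]
      exact ih.comp h1
  | pred k ih =>
      have h : (T ^ (-(k : ℤ) - 1)) = T ^ (-(k : ℤ)) * T⁻¹ := by
        rw [zpow_sub, zpow_one]
      have h2' : MeasurePreserving ⇑(T⁻¹) μ μ := by
        simpa [Equiv.Perm.inv_def] using h2
      rw [h, Equiv.Perm.coe_mul]
      exact ih.comp h2'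

private lemma me_zpow' {X : Type*} [MeasurableSpace X] {μ : Measure X}
    (T : Equiv.Perm X) (h1 : MeasurePreserving ⇑T μ μ)
    (h2 : MeasurePreserving ⇑T.symm μ μ) (n : ℤ) : MeasurableEmbedding ⇑(T ^ n) := by
  let e : X ≃ᵐ X :=
    { toEquiv := (T ^ n : Equiv.Perm X)
      measurable_toFun := (mp_zpow' T h1 h2 n).measurable
      measurable_invFun := by
        have h : (T ^ n).symm = ⇑(T ^ (-n)) := by
          rw [← Equiv.Perm.inv_def, ← zpow_neg]
        rw [show ((T^n : Equiv.Perm X) : X ≃ X).symm = ⇑(T^n).symm from rfl, h]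
        exact (mp_zpow' T h1 h2 (-n)).measurable }
  exact e.measurableEmbedding

private lemma zpow_apply_comp' {X : Type*} (T : Equiv.Perm X) (a b : ℤ) (x : X) :
    (T ^ a) ((T ^ b) x) = (T ^ (a + b)) x := by
  rw [zpow_add, Equiv.Perm.mul_apply]

section
variable {X : Type*} [MeasurableSpace X] {μ : Measure X} [IsProbabilityMeasure μ]

private lemma coe_sum' (s : Finset ℕ) (g : ℕ → Lp ℂ 2 μ) :
    ⇑(∑ i ∈ s, g i) =ᵐ[μ] fun x => ∑ i ∈ s, (g i : X → ℂ) x := by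
  classical
  induction s using Finset.induction_on with
  | empty => simp only [Finset.sum_empty]; exact Lp.coeFn_zero ℂ 2 μ
  | @insert a s hni ih =>
      rw [Finset.sum_insert hni]
      filter_upwards [Lp.coeFn_add (g a) (∑ i ∈ s, g i), ih] with x h1 h2
      rw [h1]
      simp only [Pi.add_apply, h2, Finset.sum_insert hni]

private lemma int_sum' (s : Finset ℕ) (g : ℕ → Lp ℂ 2 μ) :
    ∫ x, (∑ i ∈ s, g i : Lp ℂ 2 μ) x ∂μ = ∑ i ∈ s, ∫ x, (g i : X → ℂ) x ∂μ := by
  rw [integral_congr_ae (coe_sum' s g)]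
  exact integral_finset_sum s fun i _ => (Lp.memLp (g i)).integrable one_le_two

private lemma int_norm_le_L2 {w : X → ℂ} (hw : MemLp w 2 μ) :
    ∫ x, ‖w x‖ ∂μ ≤ (eLpNorm w 2 μ).toReal := by
  have h1 : ∫ x, ‖w x‖ ∂μ = (eLpNorm w 1 μ).toReal := by
    rw [integral_norm_eq_lintegral_enorm hw.aestronglyMeasurable,
      eLpNorm_one_eq_lintegral_enorm]
  rw [h1]
  exact ENNReal.toReal_mono hw.eLpNorm_ne_top
    (eLpNorm_le_eLpNorm_of_exponent_le (by norm_num) hw.aestronglyMeasurable)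

private lemma norm_int_le_L2 {w : X → ℂ} (hw : MemLp w 2 μ) :
    ‖∫ x, w x ∂μ‖ ≤ (eLpNorm w 2 μ).toReal :=
  (norm_integral_le_integral_norm w).trans (int_norm_le_L2 hw)

private lemma avg_key (T : Equiv.Perm X) (hT : Ergodic ⇑T μ)
    (hT' : MeasurePreserving ⇑T.symm μ μ)
    (f : X → ℂ) (hmeas : Measurable f) {C : ℝ} (hC : ∀ x, ‖f x‖ ≤ C)
    (hint : ∫ x, f x ∂μ = 0) :
    ∃ ε : ℕ → ℝ, (∀ M, 0 ≤ ε M) ∧ Tendsto ε atTop (nhds 0) ∧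
      ∀ (M : ℕ) (n : ℤ),
        (eLpNorm (fun x => ∑ m₁ ∈ Finset.Icc 1 M,
            (starRingEnd ℂ) (f ((T ^ (n - (m₁ : ℤ))) x))) 2 μ).toReal ≤ M * ε M := by
  classical
  have mp : ∀ n : ℤ, MeasurePreserving ⇑(T ^ n) μ μ :=
    mp_zpow' T hT.toMeasurePreserving hT'
  have me : ∀ n : ℤ, MeasurableEmbedding ⇑(T ^ n) :=
    me_zpow' T hT.toMeasurePreserving hT'
  set fc : X → ℂ := fun x => (starRingEnd ℂ) (f x) with hfc_def
  have hfc : Measurable fc := continuous_star.measurable.comp hmeas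
  have hfcC : ∀ x, ‖fc x‖ ≤ C := fun x => by
    show ‖(starRingEnd ℂ) (f x)‖ ≤ C
    rw [RCLike.norm_conj]; exact hC x
  have hF2 : MemLp fc 2 μ :=
    MemLp.of_bound hfc.aestronglyMeasurable C (Filter.Eventually.of_forall hfcC)
  set F : Lp ℂ 2 μ := hF2.toLp fc with hF_def
  set U : ℤ → (Lp ℂ 2 μ →+ Lp ℂ 2 μ) :=
    fun n => Lp.compMeasurePreserving ⇑(T ^ n) (mp n) with hU_def
  have coeU : ∀ (n : ℤ) (g : Lp ℂ 2 μ), ⇑(U n g) =ᵐ[μ] ⇑g ∘ ⇑(T ^ n) :=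
    fun n g => Lp.coeFn_compMeasurePreserving g (mp n)
  have normU : ∀ (n : ℤ) (g : Lp ℂ 2 μ), ‖U n g‖ = ‖g‖ :=
    fun n g => Lp.norm_compMeasurePreserving g (mp n)
  have eqU : ∀ (a b : ℤ) (g : Lp ℂ 2 μ), U a (U b g) = U (b + a) g := by
    intro a b g
    apply Lp.ext
    calc ⇑(U a (U b g)) =ᵐ[μ] ⇑(U b g) ∘ ⇑(T ^ a) := coeU a (U b g)
      _ =ᵐ[μ] (⇑g ∘ ⇑(T ^ b)) ∘ ⇑(T ^ a) :=
        (mp a).quasiMeasurePreserving.ae_eq_comp (coeU b g)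
      _ = ⇑g ∘ ⇑(T ^ (b + a)) := by
          funext x; simp only [Function.comp_apply]; rw [zpow_apply_comp']
      _ =ᵐ[μ] ⇑(U (b + a) g) := (coeU (b + a) g).symm
  set Ucl : Lp ℂ 2 μ →L[ℂ] Lp ℂ 2 μ :=
    (Lp.compMeasurePreservingₗᵢ ℂ ⇑(T ^ (1 : ℤ)) (mp 1)).toContinuousLinearMap with hUcl_def
  have hUcl_apply : ∀ g : Lp ℂ 2 μ, Ucl g = U 1 g := fun g => rfl
  have hUclnorm : ‖Ucl‖ ≤ 1 := LinearIsometry.norm_toContinuousLinearMap_le _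
  have iterU : ∀ (k : ℕ), (⇑Ucl)^[k] F = U (k : ℤ) F := by
    intro k
    induction k with
    | zero =>
        simp only [Function.iterate_zero, id_eq, Nat.cast_zero]
        apply Lp.ext
        refine ((coeU 0 F).trans ?_).symm
        filter_upwards with x
        simp
    | succ k ih =>
        rw [Function.iterate_succ_apply', ih, hUcl_apply, eqU]
        norm_num
  have hip := Ucl.tendsto_birkhoffAverage_orthogonalProjection hUclnorm F
  set bA : ℕ → Lp ℂ 2 μ := fun M => birkhoffAverage ℂ ⇑Ucl _root_.id M F with hbA_def
  set L : Lp ℂ 2 μ := ↑((Submodule.orthogonalProjectionOnto (Ucl.eqLocus (1 : Lp ℂ 2 μ →L[ℂ] Lp ℂ 2 μ))) F) with hL_def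
  have hLfix : Ucl L = L := by
    have h2 := ((Submodule.orthogonalProjectionOnto (Ucl.eqLocus (1 : Lp ℂ 2 μ →L[ℂ] Lp ℂ 2 μ))) F).2
    rw [LinearMap.mem_eqLocus] at h2
    exact h2
  -- L is a.e. constant and has zero integral, hence L = 0
  have hLcomp : ⇑L ∘ ⇑T =ᵐ[μ] ⇑L := by
    have h1 : ⇑(U 1 L) =ᵐ[μ] ⇑L ∘ ⇑(T ^ (1 : ℤ)) := coeU 1 L
    have h2 : U 1 L = L := by rw [← hUcl_apply, hLfix]
    rw [h2, show (T ^ (1 : ℤ)) = T from zpow_one T] at h1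
    exact h1.symm
  obtain ⟨c, hc⟩ := hT.ae_eq_const_of_ae_eq_comp₀
    ((Lp.aestronglyMeasurable L).aemeasurable.nullMeasurable) hLcomp
  have hcoeF : ⇑F =ᵐ[μ] fc := hF2.coeFn_toLp
  have hintfc : ∫ x, fc x ∂μ = 0 := by
    simp only [hfc_def]
    rw [integral_conj, hint, map_zero]
  have hintU : ∀ n : ℤ, ∫ x, (U n F : X → ℂ) x ∂μ = 0 := by
    intro n
    rw [integral_congr_ae (coeU n F)]
    have h1 : ∫ x, (⇑F ∘ ⇑(T ^ n)) x ∂μ = ∫ x, (F : X → ℂ) x ∂μ :=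
      (mp n).integral_comp (me n) _
    rw [h1, integral_congr_ae hcoeF, hintfc]
  have hintg : ∀ g : Lp ℂ 2 μ, Integrable (⇑g) μ := fun g =>
    (Lp.memLp g).integrable one_le_two
  have hbS : ∀ M : ℕ, birkhoffSum ⇑Ucl _root_.id M F = ∑ k ∈ Finset.range M, U (k : ℤ) F := by
    intro M
    unfold birkhoffSum
    exact Finset.sum_congr rfl fun k _ => iterU k
  have hbA_eq : ∀ M : ℕ, bA M = (M : ℂ)⁻¹ • ∑ k ∈ Finset.range M, U (k : ℤ) F := by
    intro M
    show birkhoffAverage ℂ ⇑Ucl _root_.id M F = _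
    rw [birkhoffAverage, hbS M]
  have hintbA : ∀ M : ℕ, ∫ x, (bA M : X → ℂ) x ∂μ = 0 := by
    intro M
    rw [hbA_eq M,
      integral_congr_ae (Lp.coeFn_smul ((M : ℂ)⁻¹) (∑ k ∈ Finset.range M, U (k : ℤ) F))]
    simp only [Pi.smul_apply]
    rw [integral_smul, int_sum']
    simp only [hintU]
    simp
  have hL0 : Tendsto (fun M => ∫ x, (bA M : X → ℂ) x ∂μ) atTop
      (nhds (∫ x, (L : X → ℂ) x ∂μ)) := by
    have key : ∀ M, ‖∫ x, (bA M : X → ℂ) x ∂μ - ∫ x, (L : X → ℂ) x ∂μ‖ ≤ ‖bA M - L‖ := by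
      intro M
      rw [← integral_sub (hintg _) (hintg _)]
      have h2 : (fun x => (bA M : X → ℂ) x - (L : X → ℂ) x) =ᵐ[μ] ⇑(bA M - L) := by
        filter_upwards [Lp.coeFn_sub (bA M) L] with x hx
        rw [hx, Pi.sub_apply]
      rw [integral_congr_ae h2, Lp.norm_def]
      exact norm_int_le_L2 (Lp.memLp _)
    have h3 : Tendsto (fun M => ‖bA M - L‖) atTop (nhds 0) :=
      tendsto_iff_norm_sub_tendsto_zero.mp hip
    have h4 : Tendsto (fun M => ∫ x, (bA M : X → ℂ) x ∂μ - ∫ x, (L : X → ℂ) x ∂μ) atTop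
        (nhds 0) := squeeze_zero_norm key h3
    have h5 := h4.add_const (∫ x, (L : X → ℂ) x ∂μ)
    simpa using h5
  have hintL : ∫ x, (L : X → ℂ) x ∂μ = 0 := by
    refine tendsto_nhds_unique hL0 ?_
    simp only [hintbA]
    exact tendsto_const_nhds
  have hc0 : c = 0 := by
    have h6 : ∫ x, (L : X → ℂ) x ∂μ = c := by
      rw [integral_congr_ae hc]
      simp [Function.const]
    rw [← h6, hintL]
  have hLzero : L = 0 := by
    apply Lp.ext
    refine hc.trans ?_
    rw [hc0]
    exact (Lp.coeFn_zero ℂ 2 μ).symm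
  rw [hLzero] at hip
  refine ⟨fun M => ‖bA M‖, fun M => norm_nonneg _, by simpa using hip.norm, ?_⟩
  intro M n
  set bS : Lp ℂ 2 μ := ∑ k ∈ Finset.range M, U (k : ℤ) F with hbS_def
  set gL : Lp ℂ 2 μ := ∑ m₁ ∈ Finset.Icc 1 M, U (n - (m₁ : ℤ)) F with hgL_def
  -- identify the pointwise function with gL
  have hglcoe : ⇑gL =ᵐ[μ]
      fun x => ∑ m₁ ∈ Finset.Icc 1 M, (starRingEnd ℂ) (f ((T ^ (n - (m₁ : ℤ))) x)) := by
    refine (coe_sum' _ _).trans ?_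
    have hterm : ∀ m₁ ∈ Finset.Icc 1 M,
        (fun x => (U (n - (m₁ : ℤ)) F : X → ℂ) x) =ᵐ[μ]
          fun x => (starRingEnd ℂ) (f ((T ^ (n - (m₁ : ℤ))) x)) := by
      intro m₁ _
      refine (coeU _ F).trans ?_
      exact (mp (n - (m₁ : ℤ))).quasiMeasurePreserving.ae_eq_comp hcoeF
    filter_upwards [eventuallyEq_sum hterm] with x hx
    simpa using hx
  have hnorm1 : (eLpNorm
      (fun x => ∑ m₁ ∈ Finset.Icc 1 M, (starRingEnd ℂ) (f ((T ^ (n - (m₁ : ℤ))) x))) 2 μ).toReal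
      = ‖gL‖ := by
    rw [Lp.norm_def, eLpNorm_congr_ae hglcoe]
  have hre : gL = U (n - M) bS := by
    rw [hgL_def, hbS_def, map_sum]
    refine Finset.sum_bij' (fun m₁ _ => M - m₁) (fun j _ => M - j) ?_ ?_ ?_ ?_ ?_
    · intro a ha
      rw [Finset.mem_Icc] at ha
      exact Finset.mem_range.mpr (show M - a < M by omega)
    · intro a ha
      rw [Finset.mem_range] at ha
      exact Finset.mem_Icc.mpr (show 1 ≤ M - a ∧ M - a ≤ M by omega)
    · intro a ha
      rw [Finset.mem_Icc] at ha
      exact Nat.sub_sub_self ha.2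
    · intro a ha
      rw [Finset.mem_range] at ha
      exact Nat.sub_sub_self (Nat.le_of_lt ha)
    · intro a ha
      rw [Finset.mem_Icc] at ha
      rw [eqU]
      have h9 : n - (a : ℤ) = ((M - a : ℕ) : ℤ) + (n - (M : ℤ)) := by omega
      rw [← h9]
  have hnorm2 : ‖gL‖ = ‖bS‖ := by rw [hre, normU]
  have hnorm3 : ‖bS‖ ≤ (M : ℝ) * ‖bA M‖ := by
    rcases Nat.eq_zero_or_pos M with hM | hM
    · subst hM
      simp [hbS_def]
    · have hMne : ((M : ℝ)) ≠ 0 := Nat.cast_ne_zero.mpr hM.ne'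
      have h7 : ‖bA M‖ = (M : ℝ)⁻¹ * ‖bS‖ := by
        rw [hbA_eq M, ← hbS_def, norm_smul, norm_inv]
        simp
      rw [h7]
      field_simp
      exact le_rfl
  rw [hnorm1, hnorm2]
  exact hnorm3
end

/-- For an ergodic invertible probability measure-preserving system and a bounded measurable
`f` with `∫ f dμ = 0`, the level-2 dual function
`𝒟₂(f) = lim_{M→∞} (1/M²) ∑_{m₁,m₂∈[M]} T^{m₁} conj f · T^{m₂} conj f · T^{m₁+m₂} f`
(limit in `L²(μ)`) has zero integral. -/
theorem stmt_2 {X : Type*} [MeasurableSpace X] (μ : Measure X) [IsProbabilityMeasure μ]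
    (T : Equiv.Perm X) (hT : Ergodic ⇑T μ) (hT' : MeasurePreserving ⇑T.symm μ μ)
    (f : X → ℂ) (hmeas : Measurable f) (hbdd : ∃ C, ∀ x, ‖f x‖ ≤ C)
    (hint : ∫ x, f x ∂μ = 0) (D : X → ℂ)
    (hD : Tendsto
      (fun M : ℕ => eLpNorm (fun x =>
        ((M : ℂ) ^ 2)⁻¹ * ∑ m ∈ Finset.Icc 1 M ×ˢ Finset.Icc 1 M,
          (starRingEnd ℂ) (f ((T ^ (m.1 : ℤ)) x)) * (starRingEnd ℂ) (f ((T ^ (m.2 : ℤ)) x)) *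
            f ((T ^ ((m.1 : ℤ) + (m.2 : ℤ))) x) - D x) 2 μ)
      atTop (nhds 0)) :
    ∫ x, D x ∂μ = 0 := by
  classical
  obtain ⟨C, hC⟩ := hbdd
  have hne : Nonempty X := by
    by_contra h
    rw [not_nonempty_iff] at h
    have h1 : μ Set.univ = 1 := measure_univ
    rw [Set.univ_eq_empty_iff.mpr h, measure_empty] at h1
    exact zero_ne_one h1
  have hC0 : 0 ≤ C := le_trans (norm_nonneg _) (hC (Classical.arbitrary X))
  have mp : ∀ n : ℤ, MeasurePreserving ⇑(T ^ n) μ μ := mp_zpow' T hT.toMeasurePreserving hT'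
  have me : ∀ n : ℤ, MeasurableEmbedding ⇑(T ^ n) := me_zpow' T hT.toMeasurePreserving hT'
  have hcfm : Measurable (fun x => (starRingEnd ℂ) (f x)) := continuous_star.measurable.comp hmeas
  have hcfC : ∀ x, ‖(starRingEnd ℂ) (f x)‖ ≤ C := fun x => by
    rw [RCLike.norm_conj]; exact hC x
  set S : ℕ → X → ℂ := fun M x =>
    ((M : ℂ) ^ 2)⁻¹ * ∑ m ∈ Finset.Icc 1 M ×ˢ Finset.Icc 1 M,
      (starRingEnd ℂ) (f ((T ^ (m.1 : ℤ)) x)) * (starRingEnd ℂ) (f ((T ^ (m.2 : ℤ)) x)) *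
        f ((T ^ ((m.1 : ℤ) + (m.2 : ℤ))) x) with hS_def
  have hD' : Tendsto (fun M : ℕ => eLpNorm (fun x => S M x - D x) 2 μ) atTop (nhds 0) := hD
  have hmb : ∀ (w : X → ℂ) (B : ℝ), Measurable w → (∀ x, ‖w x‖ ≤ B) → MemLp w 2 μ :=
    fun w B hw hB => MemLp.of_bound hw.aestronglyMeasurable B (Filter.Eventually.of_forall hB)
  have htermmeas : ∀ a b c : ℤ, Measurable (fun x =>
      (starRingEnd ℂ) (f ((T ^ a) x)) * (starRingEnd ℂ) (f ((T ^ b) x)) * f ((T ^ c) x)) :=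
    fun a b c => ((hcfm.comp (mp a).measurable).mul (hcfm.comp (mp b).measurable)).mul
      (hmeas.comp (mp c).measurable)
  have htermbdd : ∀ (a b c : ℤ) (x : X),
      ‖(starRingEnd ℂ) (f ((T ^ a) x)) * (starRingEnd ℂ) (f ((T ^ b) x)) * f ((T ^ c) x)‖
        ≤ C ^ 3 := by
    intro a b c x
    rw [norm_mul, norm_mul, RCLike.norm_conj, RCLike.norm_conj]
    have h1 : ‖f ((T ^ a) x)‖ * ‖f ((T ^ b) x)‖ * ‖f ((T ^ c) x)‖ ≤ C * C * C := by
      refine mul_le_mul (mul_le_mul (hC _) (hC _) (norm_nonneg _) hC0) (hC _) (norm_nonneg _) ?_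
      positivity
    calc _ ≤ C * C * C := h1
    _ = C ^ 3 := by ring
  have htermint : ∀ a b c : ℤ, Integrable (fun x =>
      (starRingEnd ℂ) (f ((T ^ a) x)) * (starRingEnd ℂ) (f ((T ^ b) x)) * f ((T ^ c) x)) μ :=
    fun a b c => (hmb _ (C ^ 3) (htermmeas a b c) (htermbdd a b c)).integrable one_le_two
  have hSbdd : ∀ M x, ‖S M x‖ ≤ C ^ 3 := by
    intro M x
    have h1 : ‖∑ m ∈ Finset.Icc 1 M ×ˢ Finset.Icc 1 M,
        (starRingEnd ℂ) (f ((T ^ (m.1 : ℤ)) x)) * (starRingEnd ℂ) (f ((T ^ (m.2 : ℤ)) x)) *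
          f ((T ^ ((m.1 : ℤ) + (m.2 : ℤ))) x)‖ ≤ ((M : ℝ) ^ 2) * C ^ 3 := by
      refine (norm_sum_le _ _).trans ?_
      refine (Finset.sum_le_sum (fun p _ => htermbdd (p.1 : ℤ) (p.2 : ℤ) _ x)).trans ?_
      rw [Finset.sum_const, Finset.card_product, Nat.card_Icc, nsmul_eq_mul]
      push_cast
      ring_nf
      rfl
    rcases Nat.eq_zero_or_pos M with hM | hM
    · subst hM
      simp only [hS_def]
      norm_num
      positivity
    · have hM0 : (0 : ℝ) < (M : ℝ) := Nat.cast_pos.mpr hM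
      simp only [hS_def]
      rw [norm_mul]
      refine (mul_le_mul_of_nonneg_left h1 (norm_nonneg _)).trans ?_
      rw [norm_inv, norm_pow, Complex.norm_natCast]
      rw [show ((M:ℝ)^2)⁻¹ * ((M:ℝ)^2 * C^3) = C^3 by field_simp]
  have hSmeas : ∀ M, Measurable (S M) := by
    intro M
    simp only [hS_def]
    exact (Finset.measurable_sum _ (fun p _ => htermmeas _ _ _)).const_mul _
  have hS2 : ∀ M, MemLp (S M) 2 μ := fun M => hmb (S M) (C ^ 3) (hSmeas M) (hSbdd M)
  by_cases hDi : Integrable D μ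
  swap
  · exact integral_undef hDi
  have hD2 : MemLp D 2 μ := by
    have h1 : ∀ᶠ M : ℕ in atTop, eLpNorm (fun x => S M x - D x) 2 μ < 1 :=
      hD'.eventually_lt_const (by norm_num)
    obtain ⟨M, hM⟩ := h1.exists
    have hSD : MemLp (fun x => S M x - D x) 2 μ :=
      ⟨(hS2 M).aestronglyMeasurable.sub hDi.aestronglyMeasurable, hM.trans_le le_top⟩
    have h2 : MemLp (fun x => S M x - (S M x - D x)) 2 μ := (hS2 M).sub hSD
    simpa using h2
  have htend1 : Tendsto (fun M => ∫ x, S M x ∂μ) atTop (nhds (∫ x, D x ∂μ)) := by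
    have hkey : ∀ M, ‖∫ x, S M x ∂μ - ∫ x, D x ∂μ‖
        ≤ (eLpNorm (fun x => S M x - D x) 2 μ).toReal := by
      intro M
      rw [← integral_sub ((hS2 M).integrable one_le_two) hDi]
      exact norm_int_le_L2 ((hS2 M).sub hD2)
    have htoReal : Tendsto (fun M => (eLpNorm (fun x => S M x - D x) 2 μ).toReal) atTop
        (nhds 0) := by
      have h2 := (ENNReal.tendsto_toReal ENNReal.zero_ne_top).comp hD'
      exact h2
    have h4 := squeeze_zero_norm hkey htoReal
    have h5 := h4.add_const (∫ x, D x ∂μ)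
    rw [zero_add] at h5
    refine h5.congr fun M => by ring
  obtain ⟨ε, hε0, hεlim, hεbd⟩ := avg_key T hT hT' f hmeas hC hint
  have hbig : ∀ M : ℕ, 1 ≤ M → ‖∫ x, S M x ∂μ‖ ≤ C ^ 2 * ε M := by
    intro M hM
    have hMR : (0 : ℝ) < (M : ℝ) := Nat.cast_pos.mpr hM
    have e1 : ∫ x, S M x ∂μ = ((M : ℂ) ^ 2)⁻¹ * ∑ p ∈ Finset.Icc 1 M ×ˢ Finset.Icc 1 M,
        ∫ x, (starRingEnd ℂ) (f ((T ^ (p.1 : ℤ)) x)) * (starRingEnd ℂ) (f ((T ^ (p.2 : ℤ)) x)) *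
          f ((T ^ ((p.1 : ℤ) + (p.2 : ℤ))) x) ∂μ := by
      simp only [hS_def]
      rw [integral_const_mul, integral_finset_sum _ (fun p _ => htermint _ _ _)]
    have e2 : ∀ p : ℕ × ℕ,
        (∫ x, (starRingEnd ℂ) (f ((T ^ (p.1 : ℤ)) x)) * (starRingEnd ℂ) (f ((T ^ (p.2 : ℤ)) x)) *
          f ((T ^ ((p.1 : ℤ) + (p.2 : ℤ))) x) ∂μ)
        = ∫ x, (starRingEnd ℂ) (f x) *
            (starRingEnd ℂ) (f ((T ^ ((p.2 : ℤ) - (p.1 : ℤ))) x)) * f ((T ^ (p.2 : ℤ)) x) ∂μ := by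
      intro p
      have h := (mp (p.1 : ℤ)).integral_comp (me _) (fun y => (starRingEnd ℂ) (f y) *
        (starRingEnd ℂ) (f ((T ^ ((p.2 : ℤ) - (p.1 : ℤ))) y)) * f ((T ^ (p.2 : ℤ)) y))
      rw [← h]
      congr 1
      funext x
      show _ = (starRingEnd ℂ) (f ((T ^ (p.1 : ℤ)) x)) *
        (starRingEnd ℂ) (f ((T ^ ((p.2 : ℤ) - (p.1 : ℤ))) ((T ^ (p.1 : ℤ)) x))) *
          f ((T ^ (p.2 : ℤ)) ((T ^ (p.1 : ℤ)) x))
      rw [zpow_apply_comp', zpow_apply_comp']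
      rw [show (p.2 : ℤ) - (p.1 : ℤ) + (p.1 : ℤ) = (p.2 : ℤ) by ring,
        show (p.2 : ℤ) + (p.1 : ℤ) = (p.1 : ℤ) + (p.2 : ℤ) by ring]
    have e3 : (∑ p ∈ Finset.Icc 1 M ×ˢ Finset.Icc 1 M,
        ∫ x, (starRingEnd ℂ) (f x) *
          (starRingEnd ℂ) (f ((T ^ ((p.2 : ℤ) - (p.1 : ℤ))) x)) * f ((T ^ (p.2 : ℤ)) x) ∂μ)
        = ∑ m₂ ∈ Finset.Icc 1 M, ∫ x, (starRingEnd ℂ) (f x) *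
            (∑ m₁ ∈ Finset.Icc 1 M, (starRingEnd ℂ) (f ((T ^ ((m₂ : ℤ) - (m₁ : ℤ))) x))) *
              f ((T ^ (m₂ : ℤ)) x) ∂μ := by
      rw [Finset.sum_product_right]
      refine Finset.sum_congr rfl fun m₂ _ => ?_
      have hterm2 : ∀ m₁ : ℕ, Integrable (fun x => (starRingEnd ℂ) (f x) *
          (starRingEnd ℂ) (f ((T ^ ((m₂ : ℤ) - (m₁ : ℤ))) x)) * f ((T ^ (m₂ : ℤ)) x)) μ := by
        intro m₁
        have := htermint 0 ((m₂ : ℤ) - (m₁ : ℤ)) (m₂ : ℤ)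
        simpa using this
      rw [← integral_finset_sum _ (fun m₁ _ => hterm2 m₁)]
      congr 1
      funext x
      rw [Finset.mul_sum, Finset.sum_mul]
    rw [e1, Finset.sum_congr rfl (fun p _ => e2 p), e3]
    rw [norm_mul, norm_inv, norm_pow, Complex.norm_natCast]
    have hw2 : ∀ m₂ : ℕ, MemLp (fun x =>
        ∑ m₁ ∈ Finset.Icc 1 M, (starRingEnd ℂ) (f ((T ^ ((m₂ : ℤ) - (m₁ : ℤ))) x))) 2 μ := by
      intro m₂
      refine hmb _ ((M : ℝ) * C) (Finset.measurable_sum _ fun m₁ _ =>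
        hcfm.comp (mp _).measurable) fun x => ?_
      refine (norm_sum_le _ _).trans ?_
      refine (Finset.sum_le_sum fun (m₁ : ℕ) (_ : m₁ ∈ Finset.Icc 1 M) => hcfC ((T ^ ((m₂ : ℤ) - (m₁ : ℤ))) x)).trans ?_
      rw [Finset.sum_const, Nat.card_Icc, nsmul_eq_mul]
      simp
    have hinner : ∀ m₂ ∈ Finset.Icc 1 M, ‖∫ x, (starRingEnd ℂ) (f x) *
        (∑ m₁ ∈ Finset.Icc 1 M, (starRingEnd ℂ) (f ((T ^ ((m₂ : ℤ) - (m₁ : ℤ))) x))) *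
          f ((T ^ (m₂ : ℤ)) x) ∂μ‖ ≤ C ^ 2 * ((M : ℝ) * ε M) := by
      intro m₂ _
      set w : X → ℂ := fun x =>
        ∑ m₁ ∈ Finset.Icc 1 M, (starRingEnd ℂ) (f ((T ^ ((m₂ : ℤ) - (m₁ : ℤ))) x)) with hw_def
      have hwmeas : Measurable w := Finset.measurable_sum _ fun m₁ _ =>
        hcfm.comp (mp _).measurable
      have h5 : ∀ x, ‖(starRingEnd ℂ) (f x) * w x * f ((T ^ (m₂ : ℤ)) x)‖
          ≤ C ^ 2 * ‖w x‖ := by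
        intro x
        rw [norm_mul, norm_mul, RCLike.norm_conj]
        calc ‖f x‖ * ‖w x‖ * ‖f ((T ^ (m₂ : ℤ)) x)‖
            ≤ C * ‖w x‖ * C := by
              refine mul_le_mul (mul_le_mul (hC x) le_rfl (norm_nonneg _) hC0) (hC _)
                (norm_nonneg _) ?_
              positivity
          _ = C ^ 2 * ‖w x‖ := by ring
      have hwC : ∀ x, ‖w x‖ ≤ (M : ℝ) * C := by
        intro x
        refine (norm_sum_le _ _).trans ?_
        refine (Finset.sum_le_sum fun (m₁ : ℕ) (_ : m₁ ∈ Finset.Icc 1 M) => hcfC ((T ^ ((m₂ : ℤ) - (m₁ : ℤ))) x)).trans ?_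
        rw [Finset.sum_const, Nat.card_Icc, nsmul_eq_mul]
        simp
      have htripint : Integrable
          (fun x => (starRingEnd ℂ) (f x) * w x * f ((T ^ (m₂ : ℤ)) x)) μ := by
        refine (hmb _ (C ^ 2 * ((M : ℝ) * C))
          ((hcfm.mul hwmeas).mul (hmeas.comp (mp _).measurable)) fun x => ?_).integrable
          one_le_two
        refine (h5 x).trans ?_
        have := hwC x
        have h2C : (0 : ℝ) ≤ C ^ 2 := by positivity
        exact mul_le_mul_of_nonneg_left this h2C
      have hwint : Integrable w μ := (hw2 m₂).integrable one_le_two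
      have h6 : ‖∫ x, (starRingEnd ℂ) (f x) * w x * f ((T ^ (m₂ : ℤ)) x) ∂μ‖
          ≤ ∫ x, C ^ 2 * ‖w x‖ ∂μ := by
        refine (norm_integral_le_integral_norm _).trans ?_
        exact integral_mono htripint.norm (hwint.norm.const_mul _) h5
      refine h6.trans ?_
      rw [integral_const_mul]
      have h7 : ∫ x, ‖w x‖ ∂μ ≤ (M : ℝ) * ε M :=
        (int_norm_le_L2 (hw2 m₂)).trans (hεbd M (m₂ : ℤ))
      exact mul_le_mul_of_nonneg_left h7 (by positivity)
    refine le_trans (mul_le_mul_of_nonneg_left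
      ((norm_sum_le _ _).trans (Finset.sum_le_sum hinner)) (by positivity)) ?_
    rw [Finset.sum_const, Nat.card_Icc, Nat.add_sub_cancel, nsmul_eq_mul]
    have hMne : (M : ℝ) ≠ 0 := ne_of_gt hMR
    rw [show ((M : ℝ) ^ 2)⁻¹ * ((M : ℝ) * (C ^ 2 * ((M : ℝ) * ε M))) = C ^ 2 * ε M from by
      field_simp]
  have htend0 : Tendsto (fun M => ∫ x, S M x ∂μ) atTop (nhds 0) := by
    refine squeeze_zero_norm' (a := fun M => C ^ 2 * ε M) ?_ ?_
    · filter_upwards [eventually_ge_atTop 1] with M hM using hbig M hM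
    · simpa using hεlim.const_mul (C ^ 2)
  exact tendsto_nhds_unique htend1 htend0
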